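/- In the algebra ℂ_{a,0;q}[x,y] with relations yx = [(1-aq³)/(1-aq)]q^{-1}·xy, xa = qax, ya = q²ay, the (a;q)-binomial theorem holds: (x+y)^n = Σ_{k=0}^n [n choose k]_{a,0;q} x^k y^{n-k}, where [n choose k]_{a,0;q} = [(q^{1+k}, aq^{1+k}; q)_{n-k} / (q, aq; q)_{n-k}] · q^{k(k-n)}. -/

import Mathlib

/-!
Write `F_a(n) = (q;q)_n (aq;q)_n`; the coefficient of `x^k y^(n-k)` is
`C_a(n,k) = F_a(n) / (F_a(k) F_a(n-k)) · q^(-k(n-k))`. Expanding `(x+y)^(n+1) = (x+y)(x+y)^n` and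
moving `x` and `y` to the right with `x f(a) = f(aq) x`, `y f(a) = f(aq²) y` and
`y x^k = r_k(a) x^k y`, where `r_k = (1-aq^(k+1))(1-aq^(k+2)) / ((1-aq)(1-aq²)) · q^(-k)`,
reduces the theorem to the Pascal rule `C_a(n+1,k+1) = C_(aq)(n,k) + C_(aq²)(n,k+1) r_(k+1)(a)`.
The shift `a ↦ aq` changes `F_a(n)` by the factor `(1-aq^(n+1))/(1-aq)`, so dividing the rule by
its left-hand side leaves, with `n = k+m+1`, the polynomial identity
`(1-q^(k+1))(1-aq) q^(m+1) + (1-q^(m+1))(1-aq^(k+m+3)) = (1-q^(k+m+2))(1-aq^(m+2))`.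
-/

/-- The `q`-shifted factorial `(a;q)_n = ∏_{j=0}^{n-1} (1 - a q^j)`. -/
def qPoch {K : Type*} [Field K] (a q : K) (n : ℕ) : K :=
  ∏ j ∈ Finset.range n, (1 - a * q ^ j)

open Finset

section SkewBinomial

variable {K R : Type*} [Semiring K] [Semiring R] (ι : K →+* R) (σ τ : K →+* K) {x y : R}

theorem mul_pow_eq_of_skew_commute (hx : ∀ f, x * ι f = ι (σ f) * x) {c : K}
    (hyx : y * x = ι c * (x * y)) {r : ℕ → K} (hr0 : r 0 = 1)
    (hr : ∀ k, r (k + 1) = c * σ (r k)) (k : ℕ) :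
    y * x ^ k = ι (r k) * (x ^ k * y) := by
  induction k with
  | zero => simp [hr0]
  | succ k ih =>
    calc y * x ^ (k + 1) = ι c * (x * ι (r k)) * (x ^ k * y) := by
          rw [pow_succ', ← mul_assoc, hyx, mul_assoc, mul_assoc, ih]; simp only [mul_assoc]
      _ = ι (r (k + 1)) * (x ^ (k + 1) * y) := by
          rw [hx, hr, map_mul, pow_succ']; simp only [mul_assoc]

theorem add_pow_eq_sum_of_pascal (hx : ∀ f, x * ι f = ι (σ f) * x)
    (hy : ∀ f, y * ι f = ι (τ f) * y) {r : ℕ → K}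
    (hyx : ∀ k, y * x ^ k = ι (r k) * (x ^ k * y)) {C : ℕ → ℕ → K} (h00 : C 0 0 = 1)
    (hzero : ∀ n, C (n + 1) 0 = τ (C n 0) * r 0) (hdiag : ∀ n, C (n + 1) (n + 1) = σ (C n n))
    (hpascal : ∀ n k, k < n → C (n + 1) (k + 1) = σ (C n k) + τ (C n (k + 1)) * r (k + 1))
    (n : ℕ) : (x + y) ^ n = ∑ k ∈ range (n + 1), ι (C n k) * x ^ k * y ^ (n - k) := by
  induction n with
  | zero => simp [h00]
  | succ n ih =>
    have hx_term (k : ℕ) : x * (ι (C n k) * x ^ k * y ^ (n - k))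
        = ι (σ (C n k)) * x ^ (k + 1) * y ^ (n - k) := by
      rw [← mul_assoc, ← mul_assoc, hx, mul_assoc _ x, ← pow_succ']
    have hy_term (k : ℕ) : y * (ι (C n k) * x ^ k * y ^ (n - k))
        = ι (τ (C n k) * r k) * x ^ k * y ^ (n - k + 1) := by
      rw [← mul_assoc, ← mul_assoc, hy, mul_assoc _ y, hyx, map_mul, pow_succ']
      simp only [mul_assoc]
    calc (x + y) ^ (n + 1)
        = ∑ k ∈ range (n + 1), ι (σ (C n k)) * x ^ (k + 1) * y ^ (n - k)
          + ∑ k ∈ range (n + 1), ι (τ (C n k) * r k) * x ^ k * y ^ (n - k + 1) := by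
          simp only [pow_succ' _ n, ih, add_mul, mul_sum, hx_term, hy_term, sum_add_distrib]
      _ = ∑ k ∈ range (n + 2), ι (C (n + 1) k) * x ^ k * y ^ (n + 1 - k) := by
          rw [sum_range_succ, sum_range_succ', sum_range_succ' _ (n + 1), sum_range_succ,
            hzero, hdiag]
          have hmid : ∀ k ∈ range n,
              ι (C (n + 1) (k + 1)) * x ^ (k + 1) * y ^ (n + 1 - (k + 1))
              = ι (σ (C n k)) * x ^ (k + 1) * y ^ (n - k)
                + ι (τ (C n (k + 1)) * r (k + 1)) * x ^ (k + 1) * y ^ (n - (k + 1) + 1) := by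
            intro k hk
            have hk : k < n := mem_range.mp hk
            rw [hpascal n k hk, map_add, add_mul, add_mul, Nat.add_sub_add_right,
              Nat.sub_add_eq, Nat.sub_add_cancel (Nat.sub_pos_of_lt hk)]
          rw [sum_congr rfl hmid, sum_add_distrib]
          simp only [Nat.sub_self, Nat.sub_zero]
          abel

end SkewBinomial

section QPochhammer

variable {K : Type*} [Field K] (z q : K)

theorem qPoch_succ (n : ℕ) : qPoch z q (n + 1) = qPoch z q n * (1 - z * q ^ n) :=
  prod_range_succ _ _

theorem qPoch_add (m n : ℕ) : qPoch z q (m + n) = qPoch z q m * qPoch (z * q ^ m) q n := by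
  simp only [qPoch, prod_range_add, mul_assoc, pow_add]

theorem qPoch_succ' (n : ℕ) : qPoch z q (n + 1) = (1 - z) * qPoch (z * q) q n := by
  rw [add_comm, qPoch_add, pow_one, qPoch, prod_range_one, pow_zero, mul_one]

theorem map_qPoch {L : Type*} [Field L] (φ : K →+* L) (n : ℕ) :
    φ (qPoch z q n) = qPoch (φ z) (φ q) n := by
  simp [qPoch]

end QPochhammer

section AQBinomial

variable {K : Type*} [Field K] (a q : K)

def aqFactorial (n : ℕ) : K := qPoch q q n * qPoch (a * q) q n

def aqBinomial (n k : ℕ) : K :=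
  qPoch (q ^ (k + 1)) q (n - k) * qPoch (a * q ^ (k + 1)) q (n - k) /
      (qPoch q q (n - k) * qPoch (a * q) q (n - k)) *
    q ^ ((k : ℤ) * ((k : ℤ) - (n : ℤ)))

def skewFactor (k : ℕ) : K :=
  (1 - a * q ^ (k + 1)) * (1 - a * q ^ (k + 2)) / ((1 - a * q) * (1 - a * q ^ 2)) * (q ^ k)⁻¹

theorem aqFactorial_succ (n : ℕ) :
    aqFactorial a q (n + 1) = aqFactorial a q n * ((1 - q ^ (n + 1)) * (1 - a * q ^ (n + 1))) := by
  simp only [aqFactorial, qPoch_succ, ← pow_succ', mul_assoc]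
  ring

theorem aqFactorial_ne_zero (hq : ∀ m : ℕ, q ^ (m + 1) ≠ 1)
    (ha : ∀ m : ℕ, 1 - a * q ^ (m + 1) ≠ 0) (n : ℕ) : aqFactorial a q n ≠ 0 := by
  induction n with
  | zero => simp [aqFactorial, qPoch]
  | succ n ih =>
    rw [aqFactorial_succ]
    exact mul_ne_zero ih (mul_ne_zero (sub_ne_zero.2 (hq n).symm) (ha n))

theorem aqFactorial_mul_q (ha : 1 - a * q ≠ 0) (n : ℕ) :
    aqFactorial (a * q) q n = aqFactorial a q n * (1 - a * q ^ (n + 1)) / (1 - a * q) := by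
  have h : qPoch (a * q * q) q n * (1 - a * q) = qPoch (a * q) q n * (1 - a * q ^ (n + 1)) := by
    rw [mul_comm, ← qPoch_succ', qPoch_succ, pow_succ', mul_assoc]
  rw [eq_div_iff ha, aqFactorial, aqFactorial, mul_assoc, h]
  ring

theorem aqFactorial_mul_q_sq (ha : ∀ m : ℕ, 1 - a * q ^ (m + 1) ≠ 0) (n : ℕ) :
    aqFactorial (a * q ^ 2) q n = aqFactorial a q n * (1 - a * q ^ (n + 1)) *
      (1 - a * q ^ (n + 2)) / ((1 - a * q) * (1 - a * q ^ 2)) := by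
  have h1 : 1 - a * q ≠ 0 := by simpa using ha 0
  have h2 : 1 - a * q * q ≠ 0 := by simpa [mul_assoc, ← pow_two] using ha 1
  rw [pow_two, ← mul_assoc, aqFactorial_mul_q _ _ h2, aqFactorial_mul_q _ _ h1]
  field_simp
  ring

theorem aqBinomial_add (k j : ℕ) (hk : aqFactorial a q k ≠ 0) :
    aqBinomial a q (k + j) k
      = aqFactorial a q (k + j) / (aqFactorial a q k * aqFactorial a q j) * (q ^ (k * j))⁻¹ := by
  have hexp : (k : ℤ) * ((k : ℤ) - ((k + j : ℕ) : ℤ)) = -((k * j : ℕ) : ℤ) := by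
    push_cast; ring
  obtain ⟨hqk, haqk⟩ := mul_ne_zero_iff.mp hk
  rw [aqBinomial, Nat.add_sub_cancel_left, hexp, zpow_neg, zpow_natCast, aqFactorial, aqFactorial,
    aqFactorial, qPoch_add, qPoch_add, ← pow_succ', mul_assoc a q, ← pow_succ']
  field_simp

theorem map_aqBinomial {L : Type*} [Field L] (φ : K →+* L) (n k : ℕ) :
    φ (aqBinomial a q n k) = aqBinomial (φ a) (φ q) n k := by
  simp [aqBinomial, map_qPoch]

theorem map_skewFactor {L : Type*} [Field L] (φ : K →+* L) (k : ℕ) :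
    φ (skewFactor a q k) = skewFactor (φ a) (φ q) k := by
  simp [skewFactor]

theorem aqBinomial_self (n : ℕ) : aqBinomial a q n n = 1 := by
  simp [aqBinomial, qPoch]

theorem aqBinomial_zero (hq : ∀ m : ℕ, q ^ (m + 1) ≠ 1)
    (ha : ∀ m : ℕ, 1 - a * q ^ (m + 1) ≠ 0) (n : ℕ) : aqBinomial a q n 0 = 1 := by
  simp only [aqBinomial, Nat.sub_zero, zero_add, pow_one, Nat.cast_zero, zero_mul, zpow_zero,
    mul_one]
  exact div_self (aqFactorial_ne_zero a q hq ha n)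

theorem skewFactor_zero (ha : ∀ m : ℕ, 1 - a * q ^ (m + 1) ≠ 0) : skewFactor a q 0 = 1 := by
  have h1 : 1 - a * q ≠ 0 := by simpa using ha 0
  rw [skewFactor, zero_add, pow_one, pow_zero, inv_one, mul_one, div_self (mul_ne_zero h1 (ha 1))]

theorem skewFactor_succ (ha : ∀ m : ℕ, 1 - a * q ^ (m + 1) ≠ 0) (k : ℕ) :
    skewFactor a q (k + 1) = (1 - a * q ^ 3) / (1 - a * q) * q⁻¹ * skewFactor (a * q) q k := by
  have h1 : 1 - a * q ≠ 0 := by simpa using ha 0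
  rw [skewFactor, skewFactor]
  field_simp [ha 1, ha 2]
  ring

theorem aqBinomial_pascal (hq0 : q ≠ 0) (hq : ∀ m : ℕ, q ^ (m + 1) ≠ 1)
    (ha : ∀ m : ℕ, 1 - a * q ^ (m + 1) ≠ 0) (k m : ℕ) :
    aqBinomial a q (k + m + 2) (k + 1)
      = aqBinomial (a * q) q (k + m + 1) k
        + aqBinomial (a * q ^ 2) q (k + m + 1) (k + 1) * skewFactor a q (k + 1) := by
  have hF := aqFactorial_ne_zero a q hq ha
  have hq' (m : ℕ) : 1 - q ^ (m + 1) ≠ 0 := sub_ne_zero.2 (hq m).symm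
  have h1 : 1 - a * q ≠ 0 := by simpa using ha 0
  have hFq := aqFactorial_mul_q a q h1
  have hFq2 := aqFactorial_mul_q_sq a q ha
  have hFq_ne (n : ℕ) : aqFactorial (a * q) q n ≠ 0 := by
    rw [hFq]; exact div_ne_zero (mul_ne_zero (hF n) (ha n)) h1
  have hFq2_ne (n : ℕ) : aqFactorial (a * q ^ 2) q n ≠ 0 := by
    rw [hFq2]
    exact div_ne_zero (mul_ne_zero (mul_ne_zero (hF n) (ha n)) (ha (n + 1)))
      (mul_ne_zero h1 (ha 1))
  rw [show k + m + 2 = (k + 1) + (m + 1) by ring, aqBinomial_add a q _ _ (hF _),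
    show k + m + 1 = k + (m + 1) by ring, aqBinomial_add (a * q) q _ _ (hFq_ne _),
    show k + (m + 1) = (k + 1) + m by ring, aqBinomial_add (a * q ^ 2) q _ _ (hFq2_ne _),
    hFq, hFq, hFq, hFq2, hFq2, hFq2, skewFactor]
  rw [show k + 1 + (m + 1) = k + 1 + m + 1 by ring, aqFactorial_succ a q (k + 1 + m),
    aqFactorial_succ a q k, aqFactorial_succ a q m]
  field_simp [hF k, hF m, hF (k + 1 + m), hq' k, hq' m, hq' (k + 1 + m), ha k, ha m,
    ha 1, ha (k + 1 + m), ha (m + 1), ha (k + 1), ha (k + 2)]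
  ring

end AQBinomial

/-- The `(a;q)`-binomial theorem in `ℂ_{a,0;q}[x,y]`: with relations
`yx = [(1-aq³)/(1-aq)]q⁻¹·xy`, `x·f(a) = f(aq)·x`, `y·f(a) = f(aq²)·y`, one has
`(x+y)^n = ∑_{k=0}^n [n,k]_{a,0;q} x^k y^{n-k}` where
`[n,k]_{a,0;q} = [(q^{1+k}, aq^{1+k};q)_{n-k}/(q, aq;q)_{n-k}]·q^{k(k-n)}`. -/
theorem stmt12 {K R : Type*} [Field K] [Ring R] (a q : K) (ι : K →+* R) (x y : R)
    (σ τ : K →+* K)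
    (hσa : σ a = a * q) (hσq : σ q = q)
    (hτa : τ a = a * q ^ 2) (hτq : τ q = q)
    (hx : ∀ f : K, x * ι f = ι (σ f) * x)
    (hy : ∀ f : K, y * ι f = ι (τ f) * y)
    (hq0 : q ≠ 0) (hq1 : ∀ m : ℕ, q ^ (m + 1) ≠ 1)
    (haq : ∀ m : ℤ, 1 - a * q ^ m ≠ 0)
    (hyx : y * x = ι ((1 - a * q ^ 3) / (1 - a * q) * q⁻¹) * (x * y))
    (n : ℕ) :
    (x + y) ^ n = ∑ k ∈ Finset.range (n + 1),
      ι (qPoch (q ^ (k + 1)) q (n - k) * qPoch (a * q ^ (k + 1)) q (n - k) /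
          (qPoch q q (n - k) * qPoch (a * q) q (n - k)) *
          q ^ ((k : ℤ) * ((k : ℤ) - (n : ℤ)))) *
        x ^ k * y ^ (n - k) := by
  have ha (m : ℕ) : 1 - a * q ^ (m + 1) ≠ 0 := by exact_mod_cast haq (m + 1)
  have hskew : ∀ k, y * x ^ k = ι (skewFactor a q k) * (x ^ k * y) :=
    mul_pow_eq_of_skew_commute ι σ hx hyx (skewFactor_zero a q ha) fun k => by
      rw [map_skewFactor, hσa, hσq, skewFactor_succ a q ha]
  refine add_pow_eq_sum_of_pascal ι σ τ hx hy hskew (C := aqBinomial a q)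
    (aqBinomial_self a q 0) (fun n => ?_) (fun n => ?_) (fun n k hk => ?_) n
  · rw [aqBinomial_zero a q hq1 ha, aqBinomial_zero a q hq1 ha, map_one, skewFactor_zero a q ha,
      one_mul]
  · rw [aqBinomial_self, aqBinomial_self, map_one]
  · obtain ⟨m, rfl⟩ := Nat.exists_eq_add_of_lt hk
    rw [map_aqBinomial, map_aqBinomial, hσa, hσq, hτa, hτq]
    exact aqBinomial_pascal a q hq0 hq1 ha k m
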